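/- arXiv:0801.3811 — 4 statements merged into one kernel-verified Lean document; each statement's English description precedes it below -/
import Mathlib

section
/- Let D be a division ring and E a finite-dimensional right D-vector space, and let A = End_D(E). For any D-subspace V ⊆ E, the set Hom_D(E/V, E) (viewed inside A as the endomorphisms vanishing on V) is a left ideal of A, and the map V ↦ {f ∈ A : f(V) = 0} is a bijection between the set of D-subspaces of E of dimension l and the set of left ideals of A whose dimension over the center k equals deg A · (deg A − l · ind A), where deg A = dim_D(E) · deg D and ind A = deg D. -/
open Module

/-- For a right `D`-vector space `E` (a module over `Dᵐᵒᵖ`) and a `D`-subspace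
`V ⊆ E`, the set `Hom_D(E/V, E) = {f ∈ End_D(E) : f(V) = 0}` of endomorphisms
vanishing on `V`, which is a left ideal of `A = End_D(E)`. -/
def vanishingIdeal {D E : Type*} [DivisionRing D] [AddCommGroup E] [Module Dᵐᵒᵖ E]
    (V : Submodule Dᵐᵒᵖ E) :
    Submodule (Module.End Dᵐᵒᵖ E) (Module.End Dᵐᵒᵖ E) where
  carrier := {f | ∀ v ∈ V, f v = 0}
  add_mem' := fun hf hg v hv => by
    simp [LinearMap.add_apply, hf v hv, hg v hv]
  zero_mem' := fun v _ => rfl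
  smul_mem' := fun g f hf v hv => by
    show g (f v) = 0
    rw [hf v hv, map_zero]

section Aux

set_option linter.unusedSectionVars false

variable {k D E : Type*} [Field k] [DivisionRing D] [Algebra k D]
  [AddCommGroup E] [Module Dᵐᵒᵖ E]
  [Module k E] [IsScalarTower k Dᵐᵒᵖ E] [SMulCommClass Dᵐᵒᵖ k E]

lemma mem_of_forall_vanishing {V : Submodule Dᵐᵒᵖ E} {v : E}
    (h : ∀ f ∈ vanishingIdeal V, f v = 0) : v ∈ V := by
  by_contra hv
  obtain ⟨W, hW⟩ := Submodule.exists_isCompl V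
  have hf : (W.subtype ∘ₗ Submodule.projectionOnto W V hW.symm) ∈ vanishingIdeal V := by
    intro x hx
    simp [Submodule.projectionOnto_apply_of_mem_right hW.symm hx]
  have := h _ hf
  simp only [LinearMap.comp_apply, Submodule.coe_subtype, ZeroMemClass.coe_eq_zero] at this
  rw [← LinearMap.mem_ker, Submodule.ker_projectionOnto] at this
  exact hv this

lemma vanishingIdeal_injective :
    Function.Injective (vanishingIdeal (D := D) (E := E)) := by
  intro V W h
  ext v
  constructor
  · intro hv
    exact mem_of_forall_vanishing (fun f hf => (h ▸ hf : f ∈ vanishingIdeal V) v hv)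
  · intro hv
    exact mem_of_forall_vanishing (fun f hf => (h ▸ hf : f ∈ vanishingIdeal W) v hv)

/-- `k`-dimension of the space of `D`-linear maps `M → E`. -/
lemma finrank_hom_vanishing [FiniteDimensional k D] [FiniteDimensional Dᵐᵒᵖ E]
    (M : Type*) [AddCommGroup M] [Module Dᵐᵒᵖ M] [FiniteDimensional Dᵐᵒᵖ M] :
    finrank k (M →ₗ[Dᵐᵒᵖ] E) = finrank Dᵐᵒᵖ M * finrank k E := by
  haveI : Module.Finite k Dᵐᵒᵖ := Module.Finite.equiv (MulOpposite.opLinearEquiv k)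
  haveI : Module.Finite k E := Module.Finite.trans Dᵐᵒᵖ E
  let b := finBasis Dᵐᵒᵖ M
  rw [← LinearEquiv.finrank_eq (b.constr k (M' := E)),
    Module.finrank_pi_fintype k, Finset.sum_const, Finset.card_univ, Fintype.card_fin,
    smul_eq_mul]

/-- The `k`-dimension of the vanishing ideal of `V` is
`dim_D(E/V) · dim_k E`. -/
lemma finrank_vanishingIdeal [FiniteDimensional k D] [FiniteDimensional Dᵐᵒᵖ E]
    (V : Submodule Dᵐᵒᵖ E) :
    finrank k ((vanishingIdeal V).restrictScalars k)
      = finrank Dᵐᵒᵖ (E ⧸ V) * finrank k E := by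
  haveI : Module.Finite k Dᵐᵒᵖ := Module.Finite.equiv (MulOpposite.opLinearEquiv k)
  haveI : Module.Finite k E := Module.Finite.trans Dᵐᵒᵖ E
  let Φ : ((E ⧸ V) →ₗ[Dᵐᵒᵖ] E) →ₗ[k] Module.End Dᵐᵒᵖ E :=
    { toFun := fun g => g ∘ₗ V.mkQ
      map_add' := fun g h => rfl
      map_smul' := fun c g => rfl }
  have hinj : Function.Injective Φ := fun g h hgh => Submodule.linearMap_qext V hgh
  have hrange : LinearMap.range Φ = (vanishingIdeal V).restrictScalars k := by
    ext f
    constructor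
    · rintro ⟨g, rfl⟩ v hv
      show g (V.mkQ v) = 0
      rw [show V.mkQ v = 0 from (Submodule.Quotient.mk_eq_zero V).2 hv, map_zero]
    · intro hf
      have hker : V ≤ LinearMap.ker f := fun v hv => LinearMap.mem_ker.2 (hf v hv)
      exact ⟨V.liftQ f hker, Submodule.liftQ_mkQ V f hker⟩
  rw [← hrange, LinearMap.finrank_range_of_inj hinj, finrank_hom_vanishing]

/-- Every left ideal of `End_D(E)` is the vanishing ideal of some subspace. -/
lemma exists_eq_vanishingIdeal [FiniteDimensional k D] [FiniteDimensional Dᵐᵒᵖ E]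
    (I : Submodule (Module.End Dᵐᵒᵖ E) (Module.End Dᵐᵒᵖ E)) :
    ∃ V : Submodule Dᵐᵒᵖ E, vanishingIdeal V = I := by
  classical
  haveI : Module.Finite k Dᵐᵒᵖ := Module.Finite.equiv (MulOpposite.opLinearEquiv k)
  haveI : Module.Finite k E := Module.Finite.trans Dᵐᵒᵖ E
  haveI : Module.Finite k (Module.End Dᵐᵒᵖ E) :=
    Module.Finite.equiv ((finBasis Dᵐᵒᵖ E).constr k (M' := E))
  obtain ⟨s, hs⟩ := IsNoetherian.noetherian (I.restrictScalars k)
  have hsI : (s : Set (Module.End Dᵐᵒᵖ E)) ⊆ I := by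
    intro g hg
    have : g ∈ Submodule.span k (s : Set (Module.End Dᵐᵒᵖ E)) := Submodule.subset_span hg
    rw [hs] at this
    exact this
  let V : Submodule Dᵐᵒᵖ E := ⨅ i : {x // x ∈ s}, LinearMap.ker (i : Module.End Dᵐᵒᵖ E)
  refine ⟨V, le_antisymm ?_ ?_⟩
  · -- vanishingIdeal V ≤ I
    intro f hf
    let g : E →ₗ[Dᵐᵒᵖ] ({x // x ∈ s} → E) :=
      LinearMap.pi (fun i => (i : Module.End Dᵐᵒᵖ E))
    have hVg : LinearMap.ker g = V := LinearMap.ker_pi _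
    have hker : LinearMap.ker g ≤ LinearMap.ker f := by
      rw [hVg]; exact fun v hv => LinearMap.mem_ker.2 (hf v hv)
    set q := (LinearMap.ker g).liftQ f hker with hq
    obtain ⟨h, hh⟩ := LinearMap.exists_extend
      (q ∘ₗ (g.quotKerEquivRange.symm : LinearMap.range g →ₗ[Dᵐᵒᵖ] E ⧸ LinearMap.ker g))
    have hfactor : ∀ x, f x = h (g x) := by
      intro x
      have h1 : h (g x) = (q ∘ₗ (g.quotKerEquivRange.symm :
          LinearMap.range g →ₗ[Dᵐᵒᵖ] E ⧸ LinearMap.ker g))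
            ⟨g x, LinearMap.mem_range_self g x⟩ := by
        rw [← hh]; rfl
      rw [h1]
      simp only [LinearMap.comp_apply]
      erw [LinearMap.quotKerEquivRange_symm_apply_image g x]
      rfl
    have hsum : f = ∑ i : {x // x ∈ s},
        (h ∘ₗ LinearMap.single Dᵐᵒᵖ (fun _ : {x // x ∈ s} => E) i) •
          (i : Module.End Dᵐᵒᵖ E) := by
      ext x
      rw [hfactor x]
      have : g x = ∑ i : {x // x ∈ s}, Pi.single i ((i : Module.End Dᵐᵒᵖ E) x) :=
        (Finset.univ_sum_single (g x)).symm
      rw [this, map_sum]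
      simp only [LinearMap.sum_apply, smul_eq_mul, Module.End.mul_apply, LinearMap.comp_apply,
        LinearMap.single_apply]
    rw [hsum]
    exact Submodule.sum_mem I (fun i _ => Submodule.smul_mem I _ (hsI i.2))
  · -- I ≤ vanishingIdeal V
    intro f hf v hv
    have hv' : ∀ i : {x // x ∈ s}, (i : Module.End Dᵐᵒᵖ E) v = 0 := fun i =>
      Submodule.mem_iInf (fun i : {x // x ∈ s} =>
        LinearMap.ker (i : Module.End Dᵐᵒᵖ E)) |>.1 hv i
    have hf' : f ∈ Submodule.span k (s : Set (Module.End Dᵐᵒᵖ E)) := by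
      rw [hs]; exact hf
    clear hf
    induction hf' using Submodule.span_induction with
    | mem g hg => exact hv' ⟨g, hg⟩
    | zero => rfl
    | add g₁ g₂ _ _ h1 h2 => simp [LinearMap.add_apply, h1, h2]
    | smul c g _ hg => simp [LinearMap.smul_apply, hg]

end Aux

/-- Let `D` be a division ring with center `k`, with `dim_k D = d²` (so `ind A = d`),
and let `E` be a finite-dimensional right `D`-vector space, `A = End_D(E)`,
`n = deg A = dim_D E · d`. For each `l`, the map `V ↦ {f : f(V) = 0}` is a bijection
from the `D`-subspaces of `E` of dimension `l` onto the left ideals of `A` of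
`k`-dimension `n·(n - l·d)`. -/
theorem subspace_left_ideal_bijection (k D E : Type*) [Field k] [DivisionRing D]
    [Algebra k D] [Algebra.IsCentral k D] [FiniteDimensional k D]
    [AddCommGroup E] [Module Dᵐᵒᵖ E] [FiniteDimensional Dᵐᵒᵖ E]
    [Module k E] [IsScalarTower k Dᵐᵒᵖ E] [SMulCommClass Dᵐᵒᵖ k E]
    (d : ℕ) (hd : finrank k D = d ^ 2)
    (n : ℕ) (hn : n = finrank Dᵐᵒᵖ E * d) (l : ℕ) (hl : l ≤ finrank Dᵐᵒᵖ E) :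
    Set.BijOn (fun V : Submodule Dᵐᵒᵖ E => vanishingIdeal V)
      {V : Submodule Dᵐᵒᵖ E | finrank Dᵐᵒᵖ V = l}
      {I : Submodule (Module.End Dᵐᵒᵖ E) (Module.End Dᵐᵒᵖ E) |
        finrank k (I.restrictScalars k) = n * (n - l * d)} := by
  set r := finrank Dᵐᵒᵖ E with hr
  have hkE : finrank k E = d ^ 2 * r := by
    have h1 : finrank k Dᵐᵒᵖ * finrank Dᵐᵒᵖ E = finrank k E :=
      Module.finrank_mul_finrank k Dᵐᵒᵖ E
    have h2 : finrank k Dᵐᵒᵖ = finrank k D :=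
      (MulOpposite.opLinearEquiv k).symm.finrank_eq
    rw [← h1, h2, hd, ← hr]
  have hdim : ∀ V : Submodule Dᵐᵒᵖ E, finrank k ((vanishingIdeal V).restrictScalars k)
      = (r - finrank Dᵐᵒᵖ V) * (d ^ 2 * r) := by
    intro V
    rw [finrank_vanishingIdeal V, hkE]
    congr 1
    have := Submodule.finrank_quotient_add_finrank V
    omega
  have harith : (r - l) * (d ^ 2 * r) = n * (n - l * d) := by
    subst hn
    have h3 : r * d - l * d = (r - l) * d := (Nat.sub_mul r l d).symm
    rw [h3]; ring
  have hd0 : 0 < d := by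
    have hpos : 0 < finrank k D := Module.finrank_pos
    rw [hd] at hpos
    by_contra h
    push_neg at h
    interval_cases d
    simp at hpos
  refine ⟨?_, ?_, ?_⟩
  · intro V hV
    simp only [Set.mem_setOf_eq] at hV ⊢
    rw [hdim V, hV, harith]
  · exact fun V _ W _ h => vanishingIdeal_injective h
  · intro I hI
    obtain ⟨V, rfl⟩ := exists_eq_vanishingIdeal (k := k) I
    refine ⟨V, ?_, rfl⟩
    simp only [Set.mem_setOf_eq] at hI ⊢
    have h4 : (r - finrank Dᵐᵒᵖ V) * (d ^ 2 * r) = (r - l) * (d ^ 2 * r) := by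
      rw [← hdim V, hI, harith]
    have hl' : finrank Dᵐᵒᵖ V ≤ r := Submodule.finrank_le V
    rcases Nat.eq_zero_or_pos r with hr0 | hr0
    · omega
    · have hpos : 0 < d ^ 2 * r := Nat.mul_pos (pow_pos hd0 2) hr0
      have := Nat.eq_of_mul_eq_mul_right hpos h4
      omega
end

section
/- Let D be a division ring, E a finite-dimensional right D-vector space, A = End_D(E). The map V ↦ Hom_D(E, V) = {f ∈ A : image(f) ⊆ V} is a bijection between D-subspaces V ⊆ E of D-dimension l and right ideals of A of k-dimension l · deg A · ind A, where k is the center of D. -/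
open Module MulOpposite

/-- For a right `D`-vector space `E` and a `D`-subspace `V ⊆ E`, the set
`Hom_D(E, V) = {f ∈ End_D(E) : image(f) ⊆ V}`, which is a right ideal of
`A = End_D(E)` (an `Aᵐᵒᵖ`-submodule of `A`). -/
def intoIdeal {D E : Type*} [DivisionRing D] [AddCommGroup E] [Module Dᵐᵒᵖ E]
    (V : Submodule Dᵐᵒᵖ E) :
    Submodule (Module.End Dᵐᵒᵖ E)ᵐᵒᵖ (Module.End Dᵐᵒᵖ E) where
  carrier := {f | ∀ x, f x ∈ V}
  add_mem' := fun hf hg x => by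
    simp only [Set.mem_setOf_eq, LinearMap.add_apply] at *; exact V.add_mem (hf x) (hg x)
  zero_mem' := fun x => by rw [LinearMap.zero_apply]; exact V.zero_mem
  smul_mem' := fun c f hf x => by
    show (f * c.unop) x ∈ V
    exact hf _
/-- A right ideal of a `k`-algebra `A`, viewed as a `k`-subspace of `A`. -/
def rightIdealToK (k : Type*) {A : Type*} [CommSemiring k] [Ring A] [Algebra k A]
    (J : Submodule Aᵐᵒᵖ A) : Submodule k A where
  carrier := J
  add_mem' := fun ha hb => J.add_mem ha hb
  zero_mem' := J.zero_mem
  smul_mem' := fun c a ha => by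
    have h : c • a = op (algebraMap k A c) • a := by
      rw [op_smul_eq_mul, Algebra.smul_def, Algebra.commutes]
    rw [h]; exact J.smul_mem _ ha

section Aux
variable {k D E : Type*} [Field k] [DivisionRing D]
    [Algebra k D] [FiniteDimensional k D]
    [AddCommGroup E] [Module Dᵐᵒᵖ E] [FiniteDimensional Dᵐᵒᵖ E]
    [Module k E] [IsScalarTower k Dᵐᵒᵖ E] [SMulCommClass Dᵐᵒᵖ k E]

theorem mem_intoIdeal {V : Submodule Dᵐᵒᵖ E} {f : Module.End Dᵐᵒᵖ E} :
    f ∈ intoIdeal V ↔ ∀ x, f x ∈ V := Iff.rfl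

theorem mem_rightIdealToK {J : Submodule (Module.End Dᵐᵒᵖ E)ᵐᵒᵖ (Module.End Dᵐᵒᵖ E)}
    {f : Module.End Dᵐᵒᵖ E} : f ∈ rightIdealToK k J ↔ f ∈ J := Iff.rfl

/-- `intoIdeal V` as a `k`-space is `Hom_D(E, V)`. -/
noncomputable def homEquiv (V : Submodule Dᵐᵒᵖ E) :
    ↥(rightIdealToK k (intoIdeal V)) ≃ₗ[k] (E →ₗ[Dᵐᵒᵖ] ↥V) where
  toFun f := LinearMap.codRestrict V f.val f.2
  invFun g := ⟨V.subtype ∘ₗ g, fun x => (g x).2⟩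
  left_inv f := rfl
  right_inv g := rfl
  map_add' f g := rfl
  map_smul' c f := rfl

theorem finrank_intoIdeal (V : Submodule Dᵐᵒᵖ E) :
    finrank k (rightIdealToK k (intoIdeal V)) =
      finrank Dᵐᵒᵖ E * (finrank k D * finrank Dᵐᵒᵖ V) := by
  haveI : Module.Finite k Dᵐᵒᵖ := Module.Finite.equiv (opLinearEquiv k)
  haveI : Module.Finite k ↥V := Module.Finite.trans Dᵐᵒᵖ ↥V
  let b := finBasis Dᵐᵒᵖ E
  have e2 : (Fin (finrank Dᵐᵒᵖ E) → ↥V) ≃ₗ[k] (E →ₗ[Dᵐᵒᵖ] ↥V) := b.constr k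
  have h1 : finrank k ↥(rightIdealToK k (intoIdeal V)) = finrank k (E →ₗ[Dᵐᵒᵖ] ↥V) :=
    (homEquiv V).finrank_eq
  rw [h1]
  rw [← e2.finrank_eq]
  have : finrank k (Fin (finrank Dᵐᵒᵖ E) → ↥V) = finrank Dᵐᵒᵖ E * finrank k ↥V := by
    rw [Module.finrank_pi_fintype k, Finset.sum_const, Finset.card_univ, Fintype.card_fin,
      smul_eq_mul]
  rw [this, ← Module.finrank_mul_finrank k Dᵐᵒᵖ ↥V, (opLinearEquiv k).symm.finrank_eq (N := D)]

theorem intoIdeal_injective {V W : Submodule Dᵐᵒᵖ E}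
    (h : intoIdeal V = intoIdeal W) : V = W := by
  have key : ∀ V W : Submodule Dᵐᵒᵖ E, intoIdeal V ≤ intoIdeal W → V ≤ W := by
    intro V W h v hv
    obtain ⟨q, hq⟩ := Submodule.exists_isCompl (Submodule.span Dᵐᵒᵖ {v})
    set p := Submodule.span Dᵐᵒᵖ {v}
    set f : Module.End Dᵐᵒᵖ E := p.subtype ∘ₗ Submodule.projectionOnto p q hq with hf
    have hfV : f ∈ intoIdeal V := fun x => by
      have hpV : p ≤ V := Submodule.span_le.2 (Set.singleton_subset_iff.2 hv)
      exact hpV (Submodule.projectionOnto p q hq x).2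
    have hfv : f v = v := by
      have : Submodule.projectionOnto p q hq v =
          ⟨v, Submodule.mem_span_singleton_self v⟩ := by
        rw [← Submodule.projectionOnto_apply_left hq ⟨v, Submodule.mem_span_singleton_self v⟩]
      simp [hf, this]
    have := h hfV v
    rwa [hfv] at this
  exact le_antisymm (key V W (le_of_eq h)) (key W V (ge_of_eq h))

include k in
theorem intoIdeal_surj (J : Submodule (Module.End Dᵐᵒᵖ E)ᵐᵒᵖ (Module.End Dᵐᵒᵖ E)) :
    ∃ V : Submodule Dᵐᵒᵖ E, intoIdeal V = J := by
  haveI : Module.Finite k Dᵐᵒᵖ := Module.Finite.equiv (opLinearEquiv k)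
  haveI : Module.Finite k E := Module.Finite.trans Dᵐᵒᵖ E
  haveI : Module.Finite k (Module.End Dᵐᵒᵖ E) :=
    Module.Finite.equiv ((finBasis Dᵐᵒᵖ E).constr k :
      (Fin (finrank Dᵐᵒᵖ E) → E) ≃ₗ[k] Module.End Dᵐᵒᵖ E)
  set m := finrank k ↥(rightIdealToK k J) with hm
  set b := finBasis k ↥(rightIdealToK k J) with hb
  set V : Submodule Dᵐᵒᵖ E :=
    ⨆ i : Fin m, LinearMap.range ((b i).val : Module.End Dᵐᵒᵖ E) with hV
  set F : (Fin m → E) →ₗ[Dᵐᵒᵖ] E :=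
    ∑ i : Fin m, ((b i).val : Module.End Dᵐᵒᵖ E) ∘ₗ LinearMap.proj i with hF
  have hrange : ∀ i : Fin m, LinearMap.range ((b i).val : Module.End Dᵐᵒᵖ E) ≤
      LinearMap.range F := by
    rintro i _ ⟨y, rfl⟩
    refine ⟨Pi.single i y, ?_⟩
    simp only [hF, LinearMap.sum_apply, LinearMap.comp_apply, LinearMap.proj_apply]
    rw [Finset.sum_eq_single i]
    · rw [Pi.single_eq_same]
    · intro j _ hj; rw [Pi.single_eq_of_ne hj, map_zero]
    · intro h; exact absurd (Finset.mem_univ i) h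
  have hVF : V ≤ LinearMap.range F := iSup_le hrange
  refine ⟨V, le_antisymm ?_ ?_⟩
  · intro g hg
    obtain ⟨h, hh⟩ := Module.projective_lifting_property F.rangeRestrict
      (g.codRestrict (LinearMap.range F) (fun x => hVF (hg x)))
      F.surjective_rangeRestrict
    have hgF : g = F ∘ₗ h := by
      ext x
      have hx := congrArg Subtype.val (LinearMap.congr_fun hh x)
      exact hx.symm
    have hgF2 : g = ∑ i : Fin m,
        ((b i).val : Module.End Dᵐᵒᵖ E) ∘ₗ (LinearMap.proj i ∘ₗ h) := by
      ext x
      rw [hgF]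
      simp [hF, LinearMap.sum_apply]
    rw [hgF2]
    refine J.sum_mem fun i _ => ?_
    have : ((b i).val : Module.End Dᵐᵒᵖ E) ∘ₗ (LinearMap.proj i ∘ₗ h) =
        op (LinearMap.proj i ∘ₗ h : Module.End Dᵐᵒᵖ E) • ((b i).val : Module.End Dᵐᵒᵖ E) := by
      rw [op_smul_eq_mul]; rfl
    rw [this]
    exact J.smul_mem _ (b i).2
  · intro g hg x
    have hsum : (⟨g, hg⟩ : ↥(rightIdealToK k J)) =
        ∑ i : Fin m, b.repr ⟨g, hg⟩ i • b i := (b.sum_repr _).symm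
    have hg2 : g = ∑ i : Fin m, b.repr ⟨g, hg⟩ i • ((b i).val : Module.End Dᵐᵒᵖ E) := by
      have := congrArg Subtype.val hsum
      rw [Submodule.coe_sum] at this
      simpa only [Submodule.coe_smul] using this
    have : g x = ∑ i : Fin m, b.repr ⟨g, hg⟩ i • ((b i).val : Module.End Dᵐᵒᵖ E) x := by
      conv_lhs => rw [hg2]
      simp [LinearMap.sum_apply]
    rw [this]
    refine V.sum_mem fun i _ => ?_
    rw [← algebraMap_smul Dᵐᵒᵖ (b.repr ⟨g, hg⟩ i) (((b i).val : Module.End Dᵐᵒᵖ E) x)]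
    exact V.smul_mem _ (le_iSup (fun i : Fin m => LinearMap.range ((b i).val : Module.End Dᵐᵒᵖ E))
      i ⟨x, rfl⟩)

end Aux

/-- Let `D` be a division ring with center `k`, `dim_k D = d²`, `E` a
finite-dimensional right `D`-vector space, `A = End_D(E)`, `n = deg A = dim_D E · d`.
For each `l`, the map `V ↦ Hom_D(E, V) = {f : image(f) ⊆ V}` is a bijection from the
`D`-subspaces of `E` of dimension `l` onto the right ideals of `A` of `k`-dimension
`l·n·d`. -/
theorem subspace_right_ideal_bijection (k D E : Type*) [Field k] [DivisionRing D]
    [Algebra k D] [Algebra.IsCentral k D] [FiniteDimensional k D]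
    [AddCommGroup E] [Module Dᵐᵒᵖ E] [FiniteDimensional Dᵐᵒᵖ E]
    [Module k E] [IsScalarTower k Dᵐᵒᵖ E] [SMulCommClass Dᵐᵒᵖ k E]
    (d : ℕ) (hd : finrank k D = d ^ 2)
    (n : ℕ) (hn : n = finrank Dᵐᵒᵖ E * d) (l : ℕ) (hl : l ≤ finrank Dᵐᵒᵖ E) :
    Set.BijOn (fun V : Submodule Dᵐᵒᵖ E => intoIdeal V)
      {V : Submodule Dᵐᵒᵖ E | finrank Dᵐᵒᵖ V = l}
      {J : Submodule (Module.End Dᵐᵒᵖ E)ᵐᵒᵖ (Module.End Dᵐᵒᵖ E) |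
        finrank k (rightIdealToK k J) = l * n * d} := by
  refine ⟨?_, fun V _ W _ h => intoIdeal_injective h, ?_⟩
  · intro V hV
    simp only [Set.mem_setOf_eq] at hV ⊢
    rw [finrank_intoIdeal, hV, hd, hn]; ring
  · intro J hJ
    simp only [Set.mem_setOf_eq] at hJ
    obtain ⟨V, hV⟩ := intoIdeal_surj (k := k) J
    have hdim : finrank Dᵐᵒᵖ ↥V = l := by
      have h1 := finrank_intoIdeal (k := k) V
      rw [hV, hJ, hn, hd] at h1
      rcases Nat.eq_zero_or_pos (finrank Dᵐᵒᵖ E) with hr | hr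
      · have h2 := Submodule.finrank_le V
        omega
      · have hd0 : 0 < d := by
          have hpos : 0 < finrank k D := Module.finrank_pos
          rw [hd] at hpos
          exact Nat.pos_of_ne_zero fun h0 => by simp [h0] at hpos
        have h2 : finrank Dᵐᵒᵖ E * (d ^ 2 * l) = finrank Dᵐᵒᵖ E * (d ^ 2 * finrank Dᵐᵒᵖ ↥V) := by
          rw [← h1]; ring
        have h3 := Nat.eq_of_mul_eq_mul_left hr h2
        have h4 := Nat.eq_of_mul_eq_mul_left (by positivity : 0 < d ^ 2) h3
        omega
    exact ⟨V, hdim, hV⟩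
end

section
/- Let D be a division ring, E a finite-dimensional right D-vector space, A = End_D(E), and V ⊆ E a D-subspace. Set I = {f ∈ A : f(V) = 0} (i.e., Hom_D(E/V, E)), so that I° = Hom_D(E, V). Then there is a canonical isomorphism of k-vector spaces I°/(I°·I) ≅ Hom_D(V, V), induced by restriction of endomorphisms to V. -/
open Module

/-- The right annihilator `I°` of a left ideal `I`, as a `k`-subspace. -/
def rAnnK (k : Type*) {A : Type*} [CommSemiring k] [Ring A] [Algebra k A]
    (I : Submodule A A) : Submodule k A where
  carrier := {a | ∀ x ∈ I, x * a = 0}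
  add_mem' := fun ha hb x hx => by rw [mul_add, ha x hx, hb x hx, add_zero]
  zero_mem' := fun x _ => mul_zero x
  smul_mem' := fun c a ha x hx => by rw [mul_smul_comm, ha x hx, smul_zero]

/-- The `k`-span of products `x·y`, `x ∈ S`, `y ∈ T`. -/
def prodK (k : Type*) {A : Type*} [CommSemiring k] [Ring A] [Algebra k A]
    (S T : Set A) : Submodule k A :=
  Submodule.span k {z | ∃ x ∈ S, ∃ y ∈ T, z = x * y}

/-- Let `D` be a division ring with center `k`, `E` a finite-dimensional right
`D`-vector space, `A = End_D(E)`, `V ⊆ E` a `D`-subspace, and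
`I = {f : f(V) = 0} = Hom_D(E/V, E)`. Then `I° = Hom_D(E, V)` (the endomorphisms with
image in `V`), and restriction of endomorphisms to `V` induces a canonical `k`-linear
isomorphism `I°/(I°·I) ≅ Hom_D(V, V)`. -/
theorem quotient_annihilator_iso_end (k D E : Type*) [Field k] [DivisionRing D]
    [Algebra k D] [Algebra.IsCentral k D] [FiniteDimensional k D]
    [AddCommGroup E] [Module Dᵐᵒᵖ E] [FiniteDimensional Dᵐᵒᵖ E]
    [Module k E] [IsScalarTower k Dᵐᵒᵖ E] [SMulCommClass Dᵐᵒᵖ k E]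
    (V : Submodule Dᵐᵒᵖ E) :
    ((rAnnK k (vanishingIdeal V) : Set (Module.End Dᵐᵒᵖ E)) = {f | ∀ x, f x ∈ V}) ∧
    ∃ e : (↥(rAnnK k (vanishingIdeal V)) ⧸
        ((prodK k (rAnnK k (vanishingIdeal V) : Set (Module.End Dᵐᵒᵖ E))
            (vanishingIdeal V : Set (Module.End Dᵐᵒᵖ E))).comap
          (rAnnK k (vanishingIdeal V)).subtype)) ≃ₗ[k] Module.End Dᵐᵒᵖ V,
      ∀ (f : Module.End Dᵐᵒᵖ E) (hf : f ∈ rAnnK k (vanishingIdeal V)) (x : V),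
        ((e (Submodule.Quotient.mk ⟨f, hf⟩)) x : E) = f x := by

  classical
  obtain ⟨W, hW⟩ := Submodule.exists_isCompl V
  set π : E →ₗ[Dᵐᵒᵖ] ↥V := V.projectionOnto W hW with hπ
  set ρ : E →ₗ[Dᵐᵒᵖ] ↥W := W.projectionOnto V hW.symm with hρ
  -- p : projection of E onto W along V, as an endomorphism vanishing on V
  set p : Module.End Dᵐᵒᵖ E := W.subtype.comp ρ with hp
  have hpV : p ∈ vanishingIdeal V := by
    intro v hv
    simp [hp, hρ, Submodule.projectionOnto_apply_right hW.symm ⟨v, hv⟩]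
  have hmem : ∀ f : Module.End Dᵐᵒᵖ E,
      f ∈ rAnnK k (vanishingIdeal V) ↔ ∀ x, f x ∈ V := by
    intro f
    constructor
    · intro hf x
      have h := hf p hpV
      have h2 : p (f x) = 0 := by
        have := congrArg (fun g : Module.End Dᵐᵒᵖ E => g x) h
        simpa using this
      have h3 : ρ (f x) = 0 := by
        have : (W.subtype) (ρ (f x)) = 0 := h2
        exact Subtype.ext this
      have := (Submodule.linearProjOfIsCompl_apply_eq_zero_iff hW.symm).mp h3
      simpa using this
    · intro hf g hg
      ext x
      exact hg _ (hf x)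
  have hset : ((rAnnK k (vanishingIdeal V) : Set (Module.End Dᵐᵒᵖ E))
      = {f | ∀ x, f x ∈ V}) := by
    ext f; exact hmem f
  refine ⟨hset, ?_⟩
  -- The restriction map Φ : I° → End(V)
  set Φ : ↥(rAnnK k (vanishingIdeal V)) →ₗ[k] Module.End Dᵐᵒᵖ V :=
    { toFun := fun f => (f : Module.End Dᵐᵒᵖ E).restrict
        (fun x _ => (hmem f.1).mp f.2 x)
      map_add' := by
        intro f g
        ext v
        simp [LinearMap.restrict_apply]
      map_smul' := by
        intro c f
        ext v
        simp [LinearMap.restrict_apply] } with hΦ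
  have hΦ_apply : ∀ (f : ↥(rAnnK k (vanishingIdeal V))) (x : ↥V),
      ((Φ f) x : E) = (f : Module.End Dᵐᵒᵖ E) x := by
    intro f x
    simp [hΦ, LinearMap.restrict_apply]
  -- Surjectivity
  have hsurj : Function.Surjective Φ := by
    intro φ
    set f : Module.End Dᵐᵒᵖ E := V.subtype.comp (φ.comp π) with hf
    have hfmem : f ∈ rAnnK k (vanishingIdeal V) :=
      (hmem f).mpr (fun x => (φ (π x)).2)
    refine ⟨⟨f, hfmem⟩, ?_⟩
    ext v
    have : π (v : E) = v := Submodule.linearProjOfIsCompl_apply_left hW v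
    simp only [hΦ, LinearMap.coe_mk, AddHom.coe_mk, LinearMap.restrict_apply]
    simp [hf, this]
  -- Kernel identification
  set P := ((prodK k (rAnnK k (vanishingIdeal V) : Set (Module.End Dᵐᵒᵖ E))
      (vanishingIdeal V : Set (Module.End Dᵐᵒᵖ E))).comap
      (rAnnK k (vanishingIdeal V)).subtype) with hP
  have hker : P = LinearMap.ker Φ := by
    apply le_antisymm
    · -- span of products ≤ ker
      intro f hfP
      have hfspan : (f : Module.End Dᵐᵒᵖ E) ∈ prodK k _ _ := hfP
      -- J : k-submodule of endomorphisms vanishing on V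
      set J : Submodule k (Module.End Dᵐᵒᵖ E) :=
        { carrier := {g | ∀ v ∈ V, g v = 0}
          add_mem' := fun hg hh v hv => by
            simp [LinearMap.add_apply, hg v hv, hh v hv]
          zero_mem' := fun v _ => rfl
          smul_mem' := fun c g hg v hv => by
            show c • g v = 0
            rw [hg v hv, smul_zero] } with hJ
      have hle : prodK k (rAnnK k (vanishingIdeal V) : Set (Module.End Dᵐᵒᵖ E))
          (vanishingIdeal V : Set (Module.End Dᵐᵒᵖ E)) ≤ J := by
        rw [prodK, Submodule.span_le]
        rintro z ⟨x, hx, y, hy, rfl⟩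
        intro v hv
        show x (y v) = 0
        rw [hy v hv, map_zero]
      have hfJ : ∀ v ∈ V, (f : Module.End Dᵐᵒᵖ E) v = 0 := hle hfspan
      rw [LinearMap.mem_ker]
      ext v
      rw [hΦ_apply]
      simpa using hfJ v v.2
    · -- ker ≤ span of products
      intro f hf
      rw [LinearMap.mem_ker] at hf
      have hfV : ∀ v ∈ V, (f : Module.End Dᵐᵒᵖ E) v = 0 := by
        intro v hv
        have := congrArg (fun ψ : Module.End Dᵐᵒᵖ V => (ψ ⟨v, hv⟩ : E)) hf
        simp only [LinearMap.zero_apply, ZeroMemClass.coe_zero] at this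
        rw [← this, hΦ_apply]
      -- f = f * p
      have hfp : (f : Module.End Dᵐᵒᵖ E) = (f : Module.End Dᵐᵒᵖ E) * p := by
        ext x
        have hx : x = (π x : E) + (p x) := by
          have := Submodule.projection_add_projection_eq_self hW x
          simpa [hp, hρ, hπ, add_comm] using this.symm
        conv_lhs => rw [hx]
        rw [map_add, hfV _ (π x).2, zero_add]
        rfl
      show (f : Module.End Dᵐᵒᵖ E) ∈ prodK k _ _
      rw [prodK]
      apply Submodule.subset_span
      exact ⟨f, f.2, p, hpV, hfp⟩
  set e1 := @LinearMap.quotKerEquivOfSurjective k ↥(rAnnK k (vanishingIdeal V)) (Module.End Dᵐᵒᵖ V) _ _ _ _ _ Φ hsurj with he1def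
  set e2 := Submodule.quotEquivOfEq P (LinearMap.ker Φ) hker with he2def
  have he1 : ∀ y, e1 (Submodule.Quotient.mk y) = Φ y := by
    intro y
    rw [he1def, LinearMap.quotKerEquivOfSurjective, LinearEquiv.trans_apply,
      LinearEquiv.ofTop_apply, LinearMap.quotKerEquivRange_apply_mk]
  have he2 : ∀ y, e2 (Submodule.Quotient.mk y) =
      (Submodule.Quotient.mk y : ↥(rAnnK k (vanishingIdeal V)) ⧸ LinearMap.ker Φ) := by
    intro y
    rw [he2def, Submodule.quotEquivOfEq_mk]
  refine ⟨e2.trans e1, ?_⟩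
  intro f hf x
  rw [LinearEquiv.trans_apply, he2, he1, hΦ_apply]
end

section
/- Let A be a central simple algebra over k of degree n containing a left ideal I with dim_k I = n (so A is split). Then the map J ↦ J°·I is a bijection from the set of left ideals J of A with I ⊆ J and dim_k J = nj, onto the set of k-subspaces W ⊆ I°·I with dim_k W = n − j. The inverse sends W to °(W·A), the left annihilator of the right ideal generated by W. -/
/-- The left annihilator `°S = {a : a·S = 0}` of a subset `S`, a left ideal of `A`. -/
def lAnnIdeal (A : Type*) [Ring A] (S : Set A) : Submodule A A where
  carrier := {a | ∀ x ∈ S, a * x = 0}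
  add_mem' := fun ha hb x hx => by rw [add_mul, ha x hx, hb x hx, add_zero]
  zero_mem' := fun x _ => zero_mul x
  smul_mem' := fun c a ha x hx => by
    rw [smul_eq_mul, mul_assoc, ha x hx, mul_zero]

section Aux
variable {k A : Type*} [Field k] [Ring A] [Algebra k A] [FiniteDimensional k A]

/-- left-multiplication action of `A` on a left ideal `I`, as a `k`-linear map into
endomorphisms of `I` viewed as a `k`-vector space. -/
private def actHom (k : Type*) {A : Type*} [Field k] [Ring A] [Algebra k A]
    (I : Submodule A A) :
    A →ₗ[k] (I.restrictScalars k →ₗ[k] I.restrictScalars k) where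
  toFun a :=
    { toFun := fun x => ⟨a * x.1, I.smul_mem a x.2⟩
      map_add' := fun x y => Subtype.ext (mul_add a x.1 y.1)
      map_smul' := fun c x => Subtype.ext (mul_smul_comm c a x.1) }
  map_add' := fun a b => LinearMap.ext fun x => Subtype.ext (add_mul a b x.1)
  map_smul' := fun c a => LinearMap.ext fun x => Subtype.ext (smul_mul_assoc c a x.1)

/-- factorization through a map with smaller kernel, over a field -/
private lemma factor_through {V W U : Type*} [AddCommGroup V] [AddCommGroup W]
    [AddCommGroup U] [Module k V] [Module k W] [Module k U]
    (g : V →ₗ[k] W) (f : V →ₗ[k] U) (h : LinearMap.ker g ≤ LinearMap.ker f) :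
    ∃ h' : W →ₗ[k] U, ∀ x, h' (g x) = f x := by
  set e := g.quotKerEquivRange
  set h₀ : (LinearMap.range g) →ₗ[k] U :=
    ((LinearMap.ker g).liftQ f h).comp e.symm.toLinearMap with hh₀
  obtain ⟨h', hh'⟩ := LinearMap.exists_extend h₀
  refine ⟨h', fun x => ?_⟩
  have h1 : (LinearMap.range g).subtype (e (Submodule.Quotient.mk x)) = g x :=
    g.quotKerEquivRange_apply_mk x
  calc h' (g x) = h' ((LinearMap.range g).subtype (e (Submodule.Quotient.mk x))) := by rw [h1]
    _ = (h'.comp (LinearMap.range g).subtype) (e (Submodule.Quotient.mk x)) := rfl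
    _ = h₀ (e (Submodule.Quotient.mk x)) := by rw [hh']
    _ = ((LinearMap.ker g).liftQ f h) (Submodule.Quotient.mk x) := by
        rw [hh₀]; simp
    _ = f x := rfl

private lemma faithful [IsSimpleRing A] (I : Submodule A A) (hex : ∃ x ∈ I, x ≠ 0)
    {a : A} (ha : ∀ x ∈ I, a * x = 0) : a = 0 := by
  haveI := IsSimpleRing.simple (R := A)
  set K : TwoSidedIdeal A := TwoSidedIdeal.mk' {b : A | ∀ x ∈ I, b * x = 0}
    (fun x _ => zero_mul x)
    (fun hb hc x hx => by rw [add_mul, hb x hx, hc x hx, add_zero])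
    (fun hb x hx => by rw [neg_mul, hb x hx, neg_zero])
    (fun {b c} hc x hx => by rw [mul_assoc, hc x hx, mul_zero])
    (fun {b c} hb x hx => by
      rw [mul_assoc]
      exact hb _ (I.smul_mem c hx)) with hK
  have hmem : ∀ b : A, b ∈ K ↔ ∀ x ∈ I, b * x = 0 := fun b =>
    TwoSidedIdeal.mem_mk' _ _ _ _ _ _ b
  rcases IsSimpleOrder.eq_bot_or_eq_top K with h | h
  · have : a ∈ K := (hmem a).2 ha
    rw [h] at this
    simpa using this
  · obtain ⟨x, hx, hx0⟩ := hex
    have : (1 : A) ∈ K := by rw [h]; trivial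
    exact absurd ((hmem 1).1 this x hx) (by simpa using hx0)

private lemma exists_act (I : Submodule A A)
    (hfa : ∀ a : A, (∀ x ∈ I, a * x = 0) → a = 0)
    (hrank : Module.finrank k A =
      Module.finrank k (I.restrictScalars k) * Module.finrank k (I.restrictScalars k))
    (f : I.restrictScalars k →ₗ[k] I.restrictScalars k) :
    ∃ a : A, ∀ x : I.restrictScalars k, a * x.1 = (f x).1 := by
  have hinj : Function.Injective (actHom k I) := by
    rw [injective_iff_map_eq_zero]
    intro a ha
    refine hfa a fun x hx => ?_
    have := congrArg (Subtype.val) (LinearMap.congr_fun ha ⟨x, hx⟩)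
    simpa [actHom] using this
  have hsurj : Function.Surjective (actHom k I) := by
    rw [← LinearMap.range_eq_top]
    apply Submodule.eq_top_of_finrank_eq (V := I.restrictScalars k →ₗ[k] I.restrictScalars k)
    rw [LinearMap.finrank_range_of_inj hinj, hrank, Module.finrank_linearMap]
  obtain ⟨a, ha⟩ := hsurj f
  exact ⟨a, fun x => by rw [← ha]; rfl⟩

/-- Density / double annihilator: if `b` kills everything in `I` killed by all of `J`,
then `b ∈ J`. -/
private lemma mem_of_ann (I : Submodule A A)
    (hfa : ∀ a : A, (∀ x ∈ I, a * x = 0) → a = 0)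
    (hrank : Module.finrank k A =
      Module.finrank k (I.restrictScalars k) * Module.finrank k (I.restrictScalars k))
    (J : Submodule A A) {b : A}
    (hb : ∀ x ∈ I, (∀ a ∈ J, a * x = 0) → b * x = 0) : b ∈ J := by
  classical
  obtain ⟨s, hs⟩ := IsNoetherian.noetherian (J.restrictScalars k)
  have hsJ : ∀ g : A, g ∈ s → g ∈ J := fun g hg => by
    have : g ∈ Submodule.span k (s : Set A) := Submodule.subset_span hg
    rw [hs] at this
    exact this
  -- the joint evaluation map
  set E := I.restrictScalars k with hE
  set ι := {x : A // x ∈ s} with hι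
  set G : E →ₗ[k] (ι → E) := LinearMap.pi (fun i => actHom k I i.1) with hG
  set f : E →ₗ[k] E := actHom k I b with hf
  have hker : LinearMap.ker G ≤ LinearMap.ker f := by
    intro x hx
    rw [LinearMap.mem_ker] at hx ⊢
    have hxI : (x : A) ∈ I := x.2
    have hxkill : ∀ a ∈ J, a * (x : A) = 0 := by
      intro a haJ
      have hsub : Submodule.span k (s : Set A) ≤
          LinearMap.ker (LinearMap.mulRight k (x : A)) := by
        rw [Submodule.span_le]
        intro g hg
        rw [SetLike.mem_coe, LinearMap.mem_ker, LinearMap.mulRight_apply]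
        have := congrFun hx ⟨g, hg⟩
        exact congrArg Subtype.val this
      have : a ∈ Submodule.span k (s : Set A) := by rw [hs]; exact haJ
      simpa using hsub this
    exact Subtype.ext (hb _ hxI hxkill)
  obtain ⟨h', hh'⟩ := factor_through G f hker
  set hmap : ι → (E →ₗ[k] E) :=
    fun i => h'.comp (LinearMap.single k (fun _ : ι => E) i) with hhm
  choose c hc using fun i => exists_act I hfa hrank (hmap i)
  set b' : A := ∑ i : ι, c i * i.1 with hb'
  have hb'J : b' ∈ J := by
    refine Submodule.sum_mem J fun i _ => ?_
    exact Submodule.smul_mem J (c i) (hsJ i.1 i.2)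
  have hbb' : b = b' := by
    have : b - b' = 0 := by
      refine hfa _ fun x hx => ?_
      have h1 : b * x = (f ⟨x, hx⟩ : A) := rfl
      have h2 : f ⟨x, hx⟩ = h' (G ⟨x, hx⟩) := (hh' _).symm
      have h3 : G ⟨x, hx⟩ = ∑ i : ι, Pi.single i (G ⟨x, hx⟩ i) :=
        (Finset.univ_sum_single _).symm
      have h4 : (f ⟨x, hx⟩ : A) = ∑ i : ι, ((hmap i) (G ⟨x, hx⟩ i) : A) := by
        conv_lhs => rw [h2, h3]
        rw [map_sum, Submodule.coe_sum]
        rfl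
      have h5 : ∀ i : ι, ((hmap i) (G ⟨x, hx⟩ i) : A) = c i * (i.1 * x) := by
        intro i
        rw [← hc i (G ⟨x, hx⟩ i)]
        rfl
      have h6 : b * x = b' * x := by
        rw [h1, h4, hb', Finset.sum_mul]
        exact Finset.sum_congr rfl fun i _ => by rw [h5 i, mul_assoc]
      rw [sub_mul, h6, sub_self]
    have := sub_eq_zero.mp this
    exact this
  rw [hbb']; exact hb'J

/-- rank-nullity count for left annihilators of subspaces of `I`. -/
private lemma finrank_lAnn (I : Submodule A A)
    (hfa : ∀ a : A, (∀ x ∈ I, a * x = 0) → a = 0)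
    (hrank : Module.finrank k A =
      Module.finrank k (I.restrictScalars k) * Module.finrank k (I.restrictScalars k))
    (U : Submodule k A) (hU : U ≤ I.restrictScalars k) :
    Module.finrank k ((lAnnIdeal A (U : Set A)).restrictScalars k)
      + Module.finrank k U * Module.finrank k (I.restrictScalars k)
      = Module.finrank k A := by
  classical
  set E := I.restrictScalars k with hE
  set r : A →ₗ[k] (U →ₗ[k] E) :=
    { toFun := fun a =>
        { toFun := fun u => ⟨a * u.1, I.smul_mem a (hU u.2)⟩
          map_add' := fun u v => Subtype.ext (mul_add a u.1 v.1)
          map_smul' := fun c u => Subtype.ext (mul_smul_comm c a u.1) }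
      map_add' := fun a b => LinearMap.ext fun u => Subtype.ext (add_mul a b u.1)
      map_smul' := fun c a => LinearMap.ext fun u => Subtype.ext (smul_mul_assoc c a u.1) }
    with hr
  have hker : LinearMap.ker r = (lAnnIdeal A (U : Set A)).restrictScalars k := by
    ext a
    simp only [LinearMap.mem_ker, Submodule.restrictScalars_mem]
    constructor
    · intro h x hx
      have := congrArg Subtype.val (LinearMap.congr_fun h ⟨x, hx⟩)
      simpa [hr] using this
    · intro h
      apply LinearMap.ext
      intro u
      exact Subtype.ext (h u.1 u.2)
  have hsurj : Function.Surjective r := by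
    intro φ
    set U₂ := U.comap E.subtype with hU₂
    set e2 := Submodule.comapSubtypeEquivOfLe hU with he2
    obtain ⟨ψ, hψ⟩ := LinearMap.exists_extend (φ.comp e2.toLinearMap)
    obtain ⟨a, ha⟩ := exists_act I hfa hrank ψ
    refine ⟨a, ?_⟩
    apply LinearMap.ext
    intro u
    apply Subtype.ext
    have h1 : (r a u).1 = a * u.1 := rfl
    have hm : (⟨u.1, hU u.2⟩ : E) ∈ U₂ := by
      simp [hU₂, Submodule.mem_comap]
    have h2 : a * u.1 = (ψ ⟨u.1, hU u.2⟩ : A) := ha ⟨u.1, hU u.2⟩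
    have h3 : ψ ⟨u.1, hU u.2⟩ = φ (e2 ⟨⟨u.1, hU u.2⟩, hm⟩) := by
      have := LinearMap.congr_fun hψ ⟨⟨u.1, hU u.2⟩, hm⟩
      simpa using this
    have h4 : e2 ⟨⟨u.1, hU u.2⟩, hm⟩ = u := by
      apply Subtype.ext
      simp [he2, Submodule.comapSubtypeEquivOfLe]
    rw [h1, h2, h3, h4]
  have hrange : LinearMap.range r = ⊤ := LinearMap.range_eq_top.2 hsurj
  have := LinearMap.finrank_range_add_finrank_ker (V₂ := U →ₗ[k] E) r
  rw [hrange, hker] at this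
  rw [finrank_top] at this
  rw [Module.finrank_linearMap] at this
  omega

/-- double annihilator the other way: `W·A`'s left annihilator's right annihilator ∩ I = W. -/
private lemma rAnn_lAnn (I : Submodule A A)
    (hfa : ∀ a : A, (∀ x ∈ I, a * x = 0) → a = 0)
    (hrank : Module.finrank k A =
      Module.finrank k (I.restrictScalars k) * Module.finrank k (I.restrictScalars k))
    (hex : ∃ x ∈ I, x ≠ 0)
    (U : Submodule k A) (hU : U ≤ I.restrictScalars k) :
    rAnnK k (lAnnIdeal A (U : Set A)) ⊓ I.restrictScalars k = U := by
  classical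
  set E := I.restrictScalars k with hE
  apply le_antisymm
  · rintro x ⟨hx1, hx2⟩
    simp only [SetLike.mem_coe, Submodule.restrictScalars_mem] at hx2
    by_contra hxU
    -- build a map killing U but not x
    set U₂ : Submodule k E := U.comap E.subtype with hU₂
    have hxE : x ∈ E := hx2
    set xh : E := ⟨x, hxE⟩ with hxh
    have hx₂ : xh ∉ U₂ := by
      simp only [hU₂, Submodule.mem_comap]
      exact hxU
    set v : E ⧸ U₂ := Submodule.Quotient.mk xh with hv
    have hv0 : v ≠ 0 := by
      rw [hv, ne_eq, Submodule.Quotient.mk_eq_zero]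
      exact hx₂
    obtain ⟨x0, hx0I, hx00⟩ := hex
    set e0 : E := ⟨x0, hx0I⟩ with he0
    have he00 : e0 ≠ 0 := fun h => hx00 (congrArg Subtype.val h)
    -- a map span{v} → E sending v to e0
    set g₀ : (Submodule.span k {v} : Submodule k (E ⧸ U₂)) →ₗ[k] E :=
      (LinearMap.toSpanSingleton k E e0).comp
        (LinearEquiv.toSpanNonzeroSingleton k (E ⧸ U₂) v hv0).symm.toLinearMap with hg₀
    obtain ⟨g, hg⟩ := LinearMap.exists_extend g₀
    have hgv : g v = e0 := by
      have hvm : v ∈ Submodule.span k {v} := Submodule.mem_span_singleton_self v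
      have h1 : g v = g₀ ⟨v, hvm⟩ := by
        have := LinearMap.congr_fun hg ⟨v, hvm⟩
        simpa using this
      rw [h1, hg₀]
      have h2 : (LinearEquiv.toSpanNonzeroSingleton k (E ⧸ U₂) v hv0).symm ⟨v, hvm⟩ = 1 := by
        apply (LinearEquiv.toSpanNonzeroSingleton k (E ⧸ U₂) v hv0).injective
        rw [LinearEquiv.apply_symm_apply]
        apply Subtype.ext
        have := LinearEquiv.toSpanNonzeroSingleton_one k (E ⧸ U₂) v hv0
        rw [this]
      simp only [LinearMap.coe_comp, Function.comp_apply, LinearEquiv.coe_coe, h2]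
      simp [LinearMap.toSpanSingleton_apply]
    set f : E →ₗ[k] E := g.comp U₂.mkQ with hf
    obtain ⟨a, ha⟩ := exists_act I hfa hrank f
    have haU : ∀ u ∈ U, a * u = 0 := by
      intro u hu
      have huE : u ∈ E := hU hu
      have h1 : a * u = (f ⟨u, huE⟩ : A) := ha ⟨u, huE⟩
      have h2 : f ⟨u, huE⟩ = g (Submodule.Quotient.mk ⟨u, huE⟩) := rfl
      have h3 : (Submodule.Quotient.mk ⟨u, huE⟩ : E ⧸ U₂) = 0 := by
        rw [Submodule.Quotient.mk_eq_zero]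
        simpa [hU₂, Submodule.mem_comap] using hu
      rw [h1, h2, h3, map_zero]
      rfl
    have : a * x = 0 := hx1 a haU
    have hax : a * x = (e0 : A) := by
      have h1 : a * x = (f xh : A) := ha xh
      rw [h1, hf]
      simp only [LinearMap.coe_comp, Function.comp_apply, Submodule.mkQ_apply]
      rw [show (Submodule.Quotient.mk xh : E ⧸ U₂) = v from rfl, hgv]
    rw [hax] at this
    exact hx00 this
  · intro u hu
    refine ⟨?_, ?_⟩
    · intro y hy
      exact hy u hu
    · exact hU hu

/-- `J° · I = J° ⊓ I` as `k`-subspaces. -/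
private lemma prodK_inf (I : Submodule A A)
    (hfa : ∀ a : A, (∀ x ∈ I, a * x = 0) → a = 0)
    (hrank : Module.finrank k A =
      Module.finrank k (I.restrictScalars k) * Module.finrank k (I.restrictScalars k))
    (J : Submodule A A) :
    prodK k (rAnnK k J : Set A) (I : Set A) = rAnnK k J ⊓ I.restrictScalars k := by
  classical
  set E := I.restrictScalars k with hE
  apply le_antisymm
  · rw [prodK, Submodule.span_le]
    rintro z ⟨a, ha, b, hb, rfl⟩
    simp only [SetLike.mem_coe] at ha hb
    refine Submodule.mem_inf.2 ⟨?_, ?_⟩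
    · intro x hx
      rw [← mul_assoc, ha x hx, zero_mul]
    · exact I.smul_mem a hb
  · rintro c ⟨hc1, hc2⟩
    simp only [SetLike.mem_coe, Submodule.restrictScalars_mem] at hc1 hc2
    -- the subspace V_J inside E
    set V₂ : Submodule k E := (rAnnK k J ⊓ E).comap E.subtype with hV₂
    obtain ⟨q, hq⟩ := V₂.exists_isCompl
    set p : E →ₗ[k] E := V₂.subtype.comp (V₂.projectionOnto q hq) with hp
    obtain ⟨a, ha⟩ := exists_act I hfa hrank p
    have hcV : (⟨c, hc2⟩ : E) ∈ V₂ := by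
      simp only [hV₂, Submodule.mem_comap, Submodule.mem_inf]
      exact ⟨hc1, hc2⟩
    have hpc : a * c = c := by
      have h1 : a * c = (p ⟨c, hc2⟩ : A) := ha ⟨c, hc2⟩
      rw [h1, hp]
      simp only [LinearMap.coe_comp, Function.comp_apply, Submodule.coe_subtype]
      rw [Submodule.projectionOnto_apply_left hq ⟨⟨c, hc2⟩, hcV⟩]
    have haJ : a ∈ rAnnK k J := by
      intro y hy
      refine hfa (y * a) fun x hx => ?_
      rw [mul_assoc]
      have h1 : a * x = (p ⟨x, hx⟩ : A) := ha ⟨x, hx⟩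
      rw [h1]
      have h2 : p ⟨x, hx⟩ ∈ V₂ := by
        rw [hp]
        simp only [LinearMap.coe_comp, Function.comp_apply, Submodule.coe_subtype]
        exact (V₂.projectionOnto q hq ⟨x, hx⟩).2
      have h3 : (p ⟨x, hx⟩ : A) ∈ rAnnK k J := by
        have := h2
        rw [hV₂, Submodule.mem_comap] at this
        exact this.1
      exact h3 y hy
    rw [prodK]
    apply Submodule.subset_span
    exact ⟨a, haJ, c, hc2, hpc.symm⟩

end Aux

/-- Let `A` be a central simple `k`-algebra of degree `n` containing a left ideal `I`
with `dim_k I = n` (so `A` is split). Then for each `j`, the map `J ↦ J°·I` is a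
bijection from the left ideals `J ⊇ I` with `dim_k J = n·j` onto the `k`-subspaces
`W ⊆ I°·I` with `dim_k W = n - j`, with inverse `W ↦ °(W·A)`. -/
theorem split_ideal_subspace_bijection (k A : Type*) [Field k] [Ring A] [Algebra k A]
    [FiniteDimensional k A] [Algebra.IsCentral k A] [IsSimpleRing A]
    (n : ℕ) (hdegA : Module.finrank k A = n ^ 2)
    (I : Submodule A A) (hdimI : Module.finrank k (I.restrictScalars k) = n)
    (j : ℕ) (hj : j ≤ n) :
    Set.BijOn (fun J : Submodule A A => prodK k (rAnnK k J : Set A) (I : Set A))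
      {J : Submodule A A | I ≤ J ∧ Module.finrank k (J.restrictScalars k) = n * j}
      {W : Submodule k A | W ≤ prodK k (rAnnK k I : Set A) (I : Set A) ∧
        Module.finrank k W = n - j} ∧
    Set.InvOn (fun W : Submodule k A =>
        lAnnIdeal A {z | ∃ w ∈ (W : Set A), ∃ b : A, z = w * b})
      (fun J : Submodule A A => prodK k (rAnnK k J : Set A) (I : Set A))
      {J : Submodule A A | I ≤ J ∧ Module.finrank k (J.restrictScalars k) = n * j}
      {W : Submodule k A | W ≤ prodK k (rAnnK k I : Set A) (I : Set A) ∧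
        Module.finrank k W = n - j} := by
  classical
  have hn : 0 < n := by
    have h0 : 0 < Module.finrank k A := Module.finrank_pos
    rw [hdegA] at h0
    exact Nat.pos_of_ne_zero fun h => by simp [h] at h0
  have hex : ∃ x ∈ I, x ≠ 0 := by
    by_contra h
    push_neg at h
    have hbot : I.restrictScalars k = ⊥ := by
      rw [Submodule.eq_bot_iff]
      exact fun x hx => h x hx
    rw [hbot, finrank_bot] at hdimI
    omega
  have hfa : ∀ a : A, (∀ x ∈ I, a * x = 0) → a = 0 := fun a ha => faithful I hex ha
  have hrank : Module.finrank k A =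
      Module.finrank k (I.restrictScalars k) * Module.finrank k (I.restrictScalars k) := by
    rw [hdimI, hdegA, sq]
  set F : Submodule A A → Submodule k A :=
    fun J => prodK k (rAnnK k J : Set A) (I : Set A) with hF
  set G : Submodule k A → Submodule A A :=
    fun W => lAnnIdeal A {z | ∃ w ∈ (W : Set A), ∃ b : A, z = w * b} with hG
  have hGW : ∀ W : Submodule k A, G W = lAnnIdeal A (W : Set A) := by
    intro W
    apply le_antisymm
    · intro a ha w hw
      have := ha (w * 1) ⟨w, hw, 1, rfl⟩
      simpa using this
    · rintro a ha z ⟨w, hw, b, rfl⟩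
      rw [← mul_assoc, ha w hw, zero_mul]
  have hJann : ∀ J : Submodule A A,
      J = lAnnIdeal A ((rAnnK k J ⊓ I.restrictScalars k : Submodule k A) : Set A) := by
    intro J
    apply le_antisymm
    · intro a haJ x hx
      exact (Submodule.mem_inf.1 hx).1 a haJ
    · intro b hb
      refine mem_of_ann I hfa hrank J fun x hxI hxkill => ?_
      exact hb x (Submodule.mem_inf.2 ⟨fun y hy => hxkill y hy, hxI⟩)
  have hdimV : ∀ J : Submodule A A, Module.finrank k (J.restrictScalars k) = n * j →
      Module.finrank k (rAnnK k J ⊓ I.restrictScalars k : Submodule k A) = n - j := by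
    intro J hJ
    have hVle : rAnnK k J ⊓ I.restrictScalars k ≤ I.restrictScalars k := inf_le_right
    have hcount := finrank_lAnn I hfa hrank _ hVle
    rw [← hJann J, hJ, hdimI, hdegA] at hcount
    set d := Module.finrank k (rAnnK k J ⊓ I.restrictScalars k : Submodule k A) with hd
    have h2 : n * (j + d) = n * n := by
      calc n * (j + d) = n * j + d * n := by rw [Nat.mul_add, Nat.mul_comm n d]
        _ = n ^ 2 := hcount
        _ = n * n := sq n
    have h3 : j + d = n := Nat.eq_of_mul_eq_mul_left hn h2
    omega
  have hdimL : ∀ W : Submodule k A, W ≤ I.restrictScalars k →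
      Module.finrank k W = n - j →
      Module.finrank k ((lAnnIdeal A (W : Set A)).restrictScalars k) = n * j := by
    intro W hWE hWdim
    have hcount := finrank_lAnn I hfa hrank W hWE
    rw [hWdim, hdimI, hdegA, sq] at hcount
    have h2 : j * n + (n - j) * n = n * n := by
      rw [← Nat.add_mul, Nat.add_sub_cancel' hj]
    have h3 : Module.finrank k ((lAnnIdeal A (W : Set A)).restrictScalars k) = j * n :=
      Nat.add_right_cancel (hcount.trans h2.symm)
    rw [h3, Nat.mul_comm]
  have hVI : prodK k (rAnnK k I : Set A) (I : Set A)
      = rAnnK k I ⊓ I.restrictScalars k := prodK_inf I hfa hrank I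
  have hmapsTo₁ : Set.MapsTo F
      {J : Submodule A A | I ≤ J ∧ Module.finrank k (J.restrictScalars k) = n * j}
      {W : Submodule k A | W ≤ prodK k (rAnnK k I : Set A) (I : Set A) ∧
        Module.finrank k W = n - j} := by
    rintro J ⟨hIJ, hJdim⟩
    have hFJ : F J = rAnnK k J ⊓ I.restrictScalars k := prodK_inf I hfa hrank J
    constructor
    · rw [hFJ, hVI]
      exact inf_le_inf_right _ (fun a ha x hx => ha x (hIJ hx))
    · rw [hFJ]
      exact hdimV J hJdim
  have hmapsTo₂ : Set.MapsTo G
      {W : Submodule k A | W ≤ prodK k (rAnnK k I : Set A) (I : Set A) ∧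
        Module.finrank k W = n - j}
      {J : Submodule A A | I ≤ J ∧ Module.finrank k (J.restrictScalars k) = n * j} := by
    rintro W ⟨hWle, hWdim⟩
    rw [hVI] at hWle
    have hWE : W ≤ I.restrictScalars k := hWle.trans inf_le_right
    rw [Set.mem_setOf_eq, hGW W]
    constructor
    · intro x hx w hw
      exact (Submodule.mem_inf.1 (hWle hw)).1 x hx
    · exact hdimL W hWE hWdim
  have hleft : Set.LeftInvOn G F
      {J : Submodule A A | I ≤ J ∧ Module.finrank k (J.restrictScalars k) = n * j} := by
    rintro J ⟨hIJ, hJdim⟩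
    have hFJ : F J = rAnnK k J ⊓ I.restrictScalars k := prodK_inf I hfa hrank J
    calc G (F J) = lAnnIdeal A ((F J : Set A)) := hGW _
      _ = lAnnIdeal A ((rAnnK k J ⊓ I.restrictScalars k : Submodule k A) : Set A) := by
          rw [hFJ]
      _ = J := (hJann J).symm
  have hright : Set.RightInvOn G F
      {W : Submodule k A | W ≤ prodK k (rAnnK k I : Set A) (I : Set A) ∧
        Module.finrank k W = n - j} := by
    rintro W ⟨hWle, hWdim⟩
    rw [hVI] at hWle
    have hWE : W ≤ I.restrictScalars k := hWle.trans inf_le_right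
    calc F (G W) = F (lAnnIdeal A (W : Set A)) := by rw [hGW]
      _ = rAnnK k (lAnnIdeal A (W : Set A)) ⊓ I.restrictScalars k :=
          prodK_inf I hfa hrank _
      _ = W := rAnn_lAnn I hfa hrank hex W hWE
  have hinv : Set.InvOn G F
      {J : Submodule A A | I ≤ J ∧ Module.finrank k (J.restrictScalars k) = n * j}
      {W : Submodule k A | W ≤ prodK k (rAnnK k I : Set A) (I : Set A) ∧
        Module.finrank k W = n - j} := ⟨hleft, hright⟩
  exact ⟨hinv.bijOn hmapsTo₁ hmapsTo₂, hinv⟩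
end
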